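/- arXiv:2604.21189 — 2 statements merged into one kernel-verified Lean document; each statement's English description precedes it below -/
import Mathlib

section
/- Let α : ℝ → ℝ be locally Lipschitz continuous, monotonically increasing, and satisfy α(0) = 0, and let h : ℝ → ℝ be differentiable on [0, ∞) with h'(t) ≥ −α(h(t)) for all t ≥ 0. If h(0) ≥ 0, then h(t) ≥ 0 for all t ≥ 0. -/
/-- Comparison lemma for a class-K-type rate: if `α : ℝ → ℝ` is locally Lipschitz,
monotone, and vanishes at `0`, and `h` is differentiable on `[0, ∞)` with
`h'(t) ≥ -α(h(t))` there and `h(0) ≥ 0`, then `h(t) ≥ 0` for all `t ≥ 0`. -/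
theorem forward_invariance_classK
    (α : ℝ → ℝ) (hlip : LocallyLipschitz α) (hmono : Monotone α) (hα0 : α 0 = 0)
    (h h' : ℝ → ℝ)
    (hdiff : ∀ t : ℝ, 0 ≤ t → HasDerivWithinAt h (h' t) (Set.Ici 0) t)
    (hineq : ∀ t : ℝ, 0 ≤ t → -α (h t) ≤ h' t)
    (h0 : 0 ≤ h 0) :
    ∀ t : ℝ, 0 ≤ t → 0 ≤ h t := by
  intro t0 ht0
  by_contra hneg
  push_neg at hneg
  have hc : ContinuousOn h (Set.Ici 0) := fun t ht => (hdiff t ht).continuousWithinAt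
  -- the set of times in [0, t0] where h is nonnegative
  set S : Set ℝ := Set.Icc 0 t0 ∩ h ⁻¹' Set.Ici 0 with hS
  have hSclosed : IsClosed S :=
    (hc.mono (Set.Icc_subset_Ici_self)).preimage_isClosed_of_isClosed isClosed_Icc isClosed_Ici
  have hSne : S.Nonempty := ⟨0, ⟨le_refl 0, ht0⟩, h0⟩
  have hSbdd : BddAbove S := ⟨t0, fun x hx => hx.1.2⟩
  set s := sSup S with hs
  have hsmem : s ∈ S := hSclosed.csSup_mem hSne hSbdd
  have hs0 : (0:ℝ) ≤ s := hsmem.1.1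
  have hst0 : s ≤ t0 := hsmem.1.2
  have hhs : 0 ≤ h s := hsmem.2
  -- on (s, t0], h is negative
  have hlt : ∀ t, s < t → t ≤ t0 → h t < 0 := by
    intro t hst htt0
    by_contra hge
    push_neg at hge
    have : t ∈ S := ⟨⟨le_trans hs0 hst.le, htt0⟩, hge⟩
    exact absurd (le_csSup hSbdd this) (not_le.2 hst)
  have hslt : s < t0 := by
    rcases lt_or_eq_of_le hst0 with hlt' | heq
    · exact hlt'
    · exact absurd hneg (not_lt.2 (heq ▸ hhs))
  -- h is monotone on [s, t0]
  have hmonoh : MonotoneOn h (Set.Icc s t0) := by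
    apply monotoneOn_of_deriv_nonneg (convex_Icc s t0)
    · exact hc.mono (fun x hx => le_trans hs0 hx.1)
    · rw [interior_Icc]
      intro x hx
      have hx0 : 0 < x := lt_of_le_of_lt hs0 hx.1
      exact ((hdiff x hx0.le).hasDerivAt (Ici_mem_nhds hx0)).differentiableAt.differentiableWithinAt
    · rw [interior_Icc]
      intro x hx
      have hx0 : 0 < x := lt_of_le_of_lt hs0 hx.1
      have hd : HasDerivAt h (h' x) x := (hdiff x hx0.le).hasDerivAt (Ici_mem_nhds hx0)
      rw [hd.deriv]
      have hhx : h x < 0 := hlt x hx.1 hx.2.le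
      have : α (h x) ≤ 0 := hα0 ▸ hmono hhx.le
      linarith [hineq x hx0.le]
  have := hmonoh ⟨le_refl s, hst0⟩ ⟨hst0, le_refl t0⟩ hst0
  linarith
end

section
/- Let ε > 0, let C : [0, ∞) → Set(ℝ³) be a time-varying safe set, and for each time t ≥ 0 let h_ε(·, t) : ℝ³ → ℝ characterize the buffered safe set: C(t) ⊖ B_ε = {y ∈ ℝ³ : h_ε(y, t) ≥ 0}. Let S(t) ⊆ ℝ³ and let y₁(t), …, y_N(t) ∈ S(t) satisfy the coverage condition at resolution ε at every time t ≥ 0. Suppose for each i ∈ {1, …, N} there is α_i > 0 such that the map t ↦ h_ε(yᵢ(t), t) is differentiable with derivative at least −α_i · h_ε(yᵢ(t), t) for all t ≥ 0, and h_ε(yᵢ(0), 0) ≥ 0. Then S(t) ⊆ C(t) for all t ≥ 0. -/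
/-! The barrier value along each sample stays nonnegative by the comparison lemma
(`e^{αt} h` is nondecreasing), so every sample lies in `C(t) ⊖ B_ε`; every point of `S(t)`
is within `ε` of a sample, hence in `C(t)`. -/

/-- The Pontryagin difference of a set `C ⊆ ℝ³` with the open `ε`-ball centered at the
origin. -/
def pontryaginDiff (C : Set (EuclideanSpace ℝ (Fin 3))) (ε : ℝ) :
    Set (EuclideanSpace ℝ (Fin 3)) :=
  {x | ∀ b : EuclideanSpace ℝ (Fin 3), ‖b‖ < ε → x + b ∈ C}

open Set

lemma monotoneOn_exp_mul_mul_of_neg_mul_le_deriv {f f' : ℝ → ℝ} (α : ℝ)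
    (hf : ∀ t : ℝ, 0 ≤ t → HasDerivWithinAt f (f' t) (Ici 0) t)
    (hineq : ∀ t : ℝ, 0 ≤ t → -α * f t ≤ f' t) :
    MonotoneOn (fun t => Real.exp (α * t) * f t) (Ici 0) := by
  have hderiv : ∀ t : ℝ, 0 ≤ t → HasDerivWithinAt (fun t => Real.exp (α * t) * f t)
      (Real.exp (α * t) * (α * f t + f' t)) (Ici 0) t := fun t ht => by
    have hexp := ((hasDerivAt_id t).const_mul α).exp.hasDerivWithinAt (s := Ici 0)
    simp only [id, mul_one] at hexp
    exact (hexp.mul (hf t ht)).congr_deriv (by ring)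
  refine monotoneOn_of_hasDerivWithinAt_nonneg (convex_Ici 0)
    (f' := fun t => Real.exp (α * t) * (α * f t + f' t))
    (fun t ht => (hderiv t ht).continuousWithinAt) (fun t ht => ?_) (fun t ht => ?_)
  · rw [interior_Ici] at ht ⊢
    exact (hderiv t ht.le).mono Ioi_subset_Ici_self
  · rw [interior_Ici] at ht
    have := hineq t ht.le
    exact mul_nonneg (Real.exp_pos _).le (by linarith)

lemma nonneg_of_neg_mul_le_deriv {f f' : ℝ → ℝ} (α : ℝ)
    (hf : ∀ t : ℝ, 0 ≤ t → HasDerivWithinAt f (f' t) (Ici 0) t)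
    (hineq : ∀ t : ℝ, 0 ≤ t → -α * f t ≤ f' t) (h0 : 0 ≤ f 0) {t : ℝ} (ht : 0 ≤ t) :
    0 ≤ f t := by
  have hmono := monotoneOn_exp_mul_mul_of_neg_mul_le_deriv α hf hineq self_mem_Ici ht ht
  simp only [mul_zero, Real.exp_zero, one_mul] at hmono
  exact nonneg_of_mul_nonneg_right (h0.trans hmono) (Real.exp_pos _)

lemma mem_of_mem_pontryaginDiff {C : Set (EuclideanSpace ℝ (Fin 3))} {ε : ℝ}
    {x p : EuclideanSpace ℝ (Fin 3)} (hx : x ∈ pontryaginDiff C ε) (hp : ‖p - x‖ < ε) :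
    p ∈ C := by
  simpa using hx (p - x) hp

lemma subset_of_forall_near_mem_pontryaginDiff {ι : Type*}
    {C S : Set (EuclideanSpace ℝ (Fin 3))} {ε : ℝ} {y : ι → EuclideanSpace ℝ (Fin 3)}
    (hy : ∀ i, y i ∈ pontryaginDiff C ε) (hcov : ∀ p ∈ S, ∃ i, ‖p - y i‖ < ε) :
    S ⊆ C := fun p hp =>
  let ⟨i, hi⟩ := hcov p hp
  mem_of_mem_pontryaginDiff (hy i) hi

theorem full_body_safety_from_CBF_general
    (ε : ℝ) (N : ℕ)
    (C S : ℝ → Set (EuclideanSpace ℝ (Fin 3)))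
    (hEps : EuclideanSpace ℝ (Fin 3) → ℝ → ℝ)
    (hchar : ∀ t : ℝ, 0 ≤ t →
      pontryaginDiff (C t) ε = {p : EuclideanSpace ℝ (Fin 3) | 0 ≤ hEps p t})
    (y : Fin N → ℝ → EuclideanSpace ℝ (Fin 3))
    (hcov : ∀ t : ℝ, 0 ≤ t → ∀ p ∈ S t, ∃ i : Fin N, ‖p - y i t‖ < ε)
    (α : Fin N → ℝ)
    (g' : Fin N → ℝ → ℝ)
    (hdiff : ∀ i : Fin N, ∀ t : ℝ, 0 ≤ t →
      HasDerivWithinAt (fun s => hEps (y i s) s) (g' i t) (Set.Ici 0) t)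
    (hineq : ∀ i : Fin N, ∀ t : ℝ, 0 ≤ t → -α i * hEps (y i t) t ≤ g' i t)
    (h0 : ∀ i : Fin N, 0 ≤ hEps (y i 0) 0) :
    ∀ t : ℝ, 0 ≤ t → S t ⊆ C t := by
  intro t ht
  have hsafe : ∀ i, y i t ∈ pontryaginDiff (C t) ε := fun i => by
    rw [hchar t ht]
    exact nonneg_of_neg_mul_le_deriv (α i) (hdiff i) (hineq i) (h0 i) ht
  exact subset_of_forall_near_mem_pontryaginDiff hsafe (hcov t ht)

/-- Combining the comparison lemma for each sampled barrier constraint with the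
full-body collision avoidance theorem: if `h_ε(·, t)` characterizes the buffered safe
set `C(t) ⊖ B_ε` as its 0-superlevel set, the sample points cover the robot surface at
resolution `ε`, and along each sample point the barrier satisfies the CBF comparison
inequality with initial value `h_ε(yᵢ(0), 0) ≥ 0`, then the full robot surface stays
in the safe set `C(t)` for all `t ≥ 0`. -/
theorem full_body_safety_from_CBF
    (ε : ℝ) (hε : 0 < ε) (N : ℕ)
    (C S : ℝ → Set (EuclideanSpace ℝ (Fin 3)))
    (hEps : EuclideanSpace ℝ (Fin 3) → ℝ → ℝ)
    (hchar : ∀ t : ℝ, 0 ≤ t →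
      pontryaginDiff (C t) ε = {p : EuclideanSpace ℝ (Fin 3) | 0 ≤ hEps p t})
    (y : Fin N → ℝ → EuclideanSpace ℝ (Fin 3))
    (hmem : ∀ t : ℝ, 0 ≤ t → ∀ i : Fin N, y i t ∈ S t)
    (hcov : ∀ t : ℝ, 0 ≤ t → ∀ p ∈ S t, ∃ i : Fin N, ‖p - y i t‖ < ε)
    (α : Fin N → ℝ) (hα : ∀ i, 0 < α i)
    (g' : Fin N → ℝ → ℝ)
    (hdiff : ∀ i : Fin N, ∀ t : ℝ, 0 ≤ t →
      HasDerivWithinAt (fun s => hEps (y i s) s) (g' i t) (Set.Ici 0) t)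
    (hineq : ∀ i : Fin N, ∀ t : ℝ, 0 ≤ t → -α i * hEps (y i t) t ≤ g' i t)
    (h0 : ∀ i : Fin N, 0 ≤ hEps (y i 0) 0) :
    ∀ t : ℝ, 0 ≤ t → S t ⊆ C t :=
  full_body_safety_from_CBF_general ε N C S hEps hchar y hcov α g' hdiff hineq h0
end
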